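/- For u > 0 and x, y ∈ ℝ define q_u(x, y) = (2πu)^{−1/2} ( exp(−(x−y)²/(2u)) − exp(−(x+y)²/(2u)) ). Then for all u, v > 0 and all x, y ≥ 0 the Chapman–Kolmogorov identity holds: ∫₀^∞ q_u(x, z) · q_v(z, y) dz = q_{u+v}(x, y). -/

import Mathlib

/-!
Method of images: `q_u(x, y) = p_u(x, y) - p_u(-x, y)` for the Gaussian kernel `p_u`, so the
integrand `z ↦ q_u(x, z) q_v(z, y)` is even and its integral over `(0, ∞)` is half the integral
over `ℝ`. Expanding the product and applying the Chapman–Kolmogorov identity of the Gaussian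
kernel (completing the square in `z`) to each of the four terms gives
`p(x, y) - p(x, -y) - p(-x, y) + p(-x, -y) = 2 q_{u+v}(x, y)`.
-/

open MeasureTheory Real

/-- The transition density of Brownian motion killed at `0`. -/
noncomputable def killedBMDensity (u x y : ℝ) : ℝ :=
  (Real.sqrt (2 * Real.pi * u))⁻¹ *
    (Real.exp (-(x - y) ^ 2 / (2 * u)) - Real.exp (-(x + y) ^ 2 / (2 * u)))

open ProbabilityTheory
open scoped NNReal

namespace ProbabilityTheory

lemma gaussianPDFReal_neg_neg (μ : ℝ) (v : ℝ≥0) (x : ℝ) :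
    gaussianPDFReal (-μ) v (-x) = gaussianPDFReal μ v x := by
  simp only [gaussianPDFReal, neg_sub_neg, ← neg_sub x μ, neg_sq]

lemma gaussianPDFReal_mul_gaussianPDFReal {v₁ v₂ : ℝ≥0} (hv₁ : v₁ ≠ 0) (hv₂ : v₂ ≠ 0)
    (x y z : ℝ) :
    gaussianPDFReal x v₁ z * gaussianPDFReal z v₂ y =
      gaussianPDFReal x (v₁ + v₂) y *
        gaussianPDFReal ((v₂ * x + v₁ * y) / (v₁ + v₂)) (v₁ * v₂ / (v₁ + v₂)) z := by
  have h₁ : 0 < (v₁ : ℝ) := by positivity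
  have h₂ : 0 < (v₂ : ℝ) := by positivity
  have := Real.pi_pos
  have hsqrt : (√(2 * π * v₁))⁻¹ * (√(2 * π * v₂))⁻¹ =
      (√(2 * π * (v₁ + v₂)))⁻¹ * (√(2 * π * (v₁ * v₂ / (v₁ + v₂))))⁻¹ := by
    rw [← mul_inv, ← mul_inv, ← Real.sqrt_mul (by positivity), ← Real.sqrt_mul (by positivity)]
    field_simp
  have hexp : -(z - x) ^ 2 / (2 * v₁) + -(y - z) ^ 2 / (2 * v₂) =
      -(y - x) ^ 2 / (2 * (v₁ + v₂)) +
        -(z - (v₂ * x + v₁ * y) / (v₁ + v₂)) ^ 2 / (2 * (v₁ * v₂ / (v₁ + v₂))) := by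
    field_simp
    ring
  simp only [gaussianPDFReal, NNReal.coe_add, NNReal.coe_div, NNReal.coe_mul]
  rw [mul_mul_mul_comm, hsqrt, ← Real.exp_add, hexp, Real.exp_add]
  ring

lemma integral_gaussianPDFReal_mul_gaussianPDFReal {v₁ v₂ : ℝ≥0} (hv₁ : v₁ ≠ 0) (hv₂ : v₂ ≠ 0)
    (x y : ℝ) :
    ∫ z, gaussianPDFReal x v₁ z * gaussianPDFReal z v₂ y = gaussianPDFReal x (v₁ + v₂) y := by
  have hw : v₁ * v₂ / (v₁ + v₂) ≠ 0 := by positivity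
  simp_rw [gaussianPDFReal_mul_gaussianPDFReal hv₁ hv₂, integral_const_mul,
    integral_gaussianPDFReal_eq_one _ hw, mul_one]

lemma integrable_gaussianPDFReal_mul_gaussianPDFReal {v₁ v₂ : ℝ≥0} (hv₁ : v₁ ≠ 0) (hv₂ : v₂ ≠ 0)
    (x y : ℝ) :
    Integrable fun z ↦ gaussianPDFReal x v₁ z * gaussianPDFReal z v₂ y := by
  simp_rw [gaussianPDFReal_mul_gaussianPDFReal hv₁ hv₂]
  exact (integrable_gaussianPDFReal _ _).const_mul _

end ProbabilityTheory

lemma integral_Ioi_eq_half_integral_of_even {f : ℝ → ℝ} (hf : ∀ z, f (-z) = f z) :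
    ∫ z in Set.Ioi 0, f z = (∫ z, f z) / 2 := by
  have : (fun z ↦ f |z|) = f := funext fun z ↦ by
    rcases abs_choice z with h | h <;> simp [h, hf]
  rw [← this, integral_comp_abs, this]
  ring

lemma killedBMDensity_eq_sub_gaussianPDFReal {u : ℝ} (hu : 0 ≤ u) (x y : ℝ) :
    killedBMDensity u x y =
      gaussianPDFReal x u.toNNReal y - gaussianPDFReal (-x) u.toNNReal y := by
  simp only [killedBMDensity, gaussianPDFReal, Real.coe_toNNReal _ hu, mul_sub]
  congr 3 <;> ring

lemma killedBMDensity_neg_left (u x y : ℝ) :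
    killedBMDensity u (-x) y = -killedBMDensity u x y := by
  simp only [killedBMDensity]
  ring_nf

lemma killedBMDensity_neg_right (u x y : ℝ) :
    killedBMDensity u x (-y) = -killedBMDensity u x y := by
  simp only [killedBMDensity]
  ring_nf

lemma integral_killedBMDensity_mul_killedBMDensity {u v : ℝ} (hu : 0 < u) (hv : 0 < v) (x y : ℝ) :
    ∫ z, killedBMDensity u x z * killedBMDensity v z y = 2 * killedBMDensity (u + v) x y := by
  have hu' : u.toNNReal ≠ 0 := by simpa using hu
  have hv' : v.toNNReal ≠ 0 := by simpa using hv
  set p := fun (a b : ℝ) (z : ℝ) ↦ gaussianPDFReal a u.toNNReal z * gaussianPDFReal z v.toNNReal b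
  have hint : ∀ a b, Integrable (p a b) := integrable_gaussianPDFReal_mul_gaussianPDFReal hu' hv'
  have hexpand : (fun z ↦ killedBMDensity u x z * killedBMDensity v z y) =
      p x y - p x (-y) - p (-x) y + p (-x) (-y) := by
    ext z
    simp only [Pi.add_apply, Pi.sub_apply, p]
    rw [killedBMDensity_eq_sub_gaussianPDFReal hu.le, killedBMDensity_eq_sub_gaussianPDFReal hv.le,
      ← gaussianPDFReal_neg_neg (-z), neg_neg]
    ring
  rw [hexpand, integral_add' (((hint _ _).sub (hint _ _)).sub (hint _ _)) (hint _ _),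
    integral_sub' ((hint _ _).sub (hint _ _)) (hint _ _), integral_sub' (hint _ _) (hint _ _)]
  simp only [p, integral_gaussianPDFReal_mul_gaussianPDFReal hu' hv']
  rw [killedBMDensity_eq_sub_gaussianPDFReal (by positivity), Real.toNNReal_add hu.le hv.le,
    ← gaussianPDFReal_neg_neg (-x), neg_neg, gaussianPDFReal_neg_neg]
  ring

theorem killedBMDensity_chapman_kolmogorov_general
    (u v : ℝ) (hu : 0 < u) (hv : 0 < v) (x y : ℝ) :
    ∫ z in Set.Ioi (0:ℝ), killedBMDensity u x z * killedBMDensity v z y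
      = killedBMDensity (u + v) x y := by
  rw [integral_Ioi_eq_half_integral_of_even, integral_killedBMDensity_mul_killedBMDensity hu hv]
  · ring
  · intro z
    rw [killedBMDensity_neg_right, killedBMDensity_neg_left, neg_mul_neg]

/-- Chapman–Kolmogorov identity for the transition density of Brownian motion killed at `0`:
`∫₀^∞ q_u(x,z) q_v(z,y) dz = q_{u+v}(x,y)` for `u, v > 0` and `x, y ≥ 0`. -/
theorem killedBMDensity_chapman_kolmogorov
    (u v : ℝ) (hu : 0 < u) (hv : 0 < v) (x y : ℝ) (hx : 0 ≤ x) (hy : 0 ≤ y) :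
    ∫ z in Set.Ioi (0:ℝ), killedBMDensity u x z * killedBMDensity v z y
      = killedBMDensity (u + v) x y :=
  killedBMDensity_chapman_kolmogorov_general u v hu hv x y
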